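/- Assume p + q = 1. Then for every t ∈ [0, b⁻¹] the operator T(t) is a Markov operator on L¹(Ω,μ): if f ∈ L¹(Ω,μ) satisfies f ≥ 0 μ-a.e., then T(t)f ≥ 0 μ-a.e. and ‖T(t)f‖_{L¹(Ω)} = ‖f‖_{L¹(Ω)}. -/

import Mathlib

/-!
Work with the `ℝ≥0∞`-valued operator `lTt`, defined like `Tt` with lintegrals, so that no
integrability conditions or junk values intervene. For `v ∈ V` with `0 ≤ tv ≤ 1`, on `(tv, 1]`
the slice `x ↦ lTt h (x, v)` is a translate of `h (·, v)` on `(0, 1 - tv]`. On `(0, tv]` the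
substitution `y = 1 + x w / v - t w` onto `(1 - t w, 1]` has Jacobian `w / v`, which cancels the
factor `w / v` in `ℓ(·, v)`, so this part integrates to `p ∫ k(w, v) J(w) dν(w) + q J(v)` with
`J(w) = ∫_{1 - tw}^1 h(y, w) dy`. Integrating over `v ∈ V`, `∫_V k(w, ·) dν = 1` and `p + q = 1`
leave `∫_V J dν`, which with the translated part reassembles `∫_Ω h`.

Applied to the indicator of a measurable set that contains `Ωᶜ` and `{f ≠ g}` and is null on `Ω`,
this conservation of mass shows that `T(t)` respects equality a.e. on `Ω`. So `f` may be replaced by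
a measurable nonnegative representative `g`, for which `T(t) g = (lTt (ofReal ∘ g)).toReal`.
-/

open MeasureTheory Set Filter Topology

/-- The measure `ℓ(·,v)` on `V` given by
`ℓ(dw,v) = p w v⁻¹ k(w,v) ν(dw) + q δ_v(dw)`. -/
noncomputable def ell (p q : ℝ) (k : ℝ → ℝ → ℝ) (ν : Measure ℝ) (V : Set ℝ) (v : ℝ) :
    Measure ℝ :=
  (ν.restrict V).withDensity (fun w => ENNReal.ofReal (p * w * v⁻¹ * k w v)) +
    (ENNReal.ofReal q) • Measure.dirac v

/-- The operator `T(t)` (for `t ∈ [0, b⁻¹]`):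
`T(t)f(x,v) = f(x − tv, v)` if `x > tv`, and
`T(t)f(x,v) = ∫_V f(1 + x w v⁻¹ − t w, w) ℓ(dw,v)` if `x ≤ tv`. -/
noncomputable def Tt (p q : ℝ) (k : ℝ → ℝ → ℝ) (ν : Measure ℝ) (V : Set ℝ) (t : ℝ)
    (f : ℝ × ℝ → ℝ) : ℝ × ℝ → ℝ :=
  fun z =>
    if t * z.2 < z.1 then f (z.1 - t * z.2, z.2)
    else ∫ w, f (1 + z.1 * w * z.2⁻¹ - t * w, w) ∂(ell p q k ν V z.2)

open scoped ENNReal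

noncomputable def lTt (p q : ℝ) (k : ℝ → ℝ → ℝ) (ν : Measure ℝ) (V : Set ℝ) (t : ℝ)
    (h : ℝ × ℝ → ℝ≥0∞) : ℝ × ℝ → ℝ≥0∞ :=
  fun z =>
    if t * z.2 < z.1 then h (z.1 - t * z.2, z.2)
    else ∫⁻ w, h (1 + z.1 * w * z.2⁻¹ - t * w, w) ∂(ell p q k ν V z.2)

theorem setLIntegral_Ioc_comp_mul_add {c : ℝ} (hc : 0 < c) (d A B : ℝ) (h : ℝ → ℝ≥0∞) :
    ∫⁻ x in Ioc A B, h (c * x + d)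
      = ENNReal.ofReal c⁻¹ * ∫⁻ y in Ioc (c * A + d) (c * B + d), h y := by
  have hemb : MeasurableEmbedding fun x : ℝ => c * x + d :=
    (Homeomorph.addRight d).measurableEmbedding.comp (measurableEmbedding_mulLeft₀ hc.ne')
  have hmap : Measure.map (fun x : ℝ => c * x + d) volume = ENNReal.ofReal c⁻¹ • volume := by
    rw [show (fun x : ℝ => c * x + d) = (· + d) ∘ (c * ·) from rfl,
      ← Measure.map_map (by fun_prop) (by fun_prop), Real.map_volume_mul_left hc.ne',
      Measure.map_smul, map_add_right_eq_self, abs_of_pos (inv_pos.2 hc)]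
  rw [(MeasurePreserving.mk hemb.measurable rfl).setLIntegral_comp_emb hemb, image_affine_Ioc hc,
    hmap, Measure.restrict_smul, lintegral_smul_measure, smul_eq_mul]

theorem setLIntegral_Ioc_comp_add_right (d A B : ℝ) (h : ℝ → ℝ≥0∞) :
    ∫⁻ x in Ioc A B, h (x + d) = ∫⁻ y in Ioc (A + d) (B + d), h y := by
  simpa using setLIntegral_Ioc_comp_mul_add one_pos d A B h

theorem setLIntegral_Ioc_density_comp_affine {p t v w : ℝ} (c : ℝ) (hv : 0 < v) (hw : 0 < w)
    (h : ℝ → ℝ≥0∞) :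
    ∫⁻ x in Ioc 0 (t * v), ENNReal.ofReal (p * w * v⁻¹ * c) * h (1 + x * w * v⁻¹ - t * w)
      = ENNReal.ofReal (p * c) * ∫⁻ y in Ioc (1 - t * w) 1, h y := by
  have hwv : 0 < w * v⁻¹ := mul_pos hw (inv_pos.2 hv)
  have hsub : ∀ x, 1 + x * w * v⁻¹ - t * w = w * v⁻¹ * x + (1 - t * w) := fun x => by ring
  have hend : w * v⁻¹ * (t * v) + (1 - t * w) = 1 := by field_simp; ring
  simp_rw [hsub]
  rw [lintegral_const_mul' _ _ ENNReal.ofReal_ne_top, setLIntegral_Ioc_comp_mul_add hwv,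
    mul_zero, zero_add, hend, ← mul_assoc, ← ENNReal.ofReal_mul' (inv_nonneg.2 hwv.le)]
  congr 2
  field_simp

theorem measurable_setLIntegral_Ioc {h : ℝ × ℝ → ℝ≥0∞} (hh : Measurable h) {a b : ℝ → ℝ}
    (ha : Measurable a) (hb : Measurable b) :
    Measurable fun w => ∫⁻ y in Ioc (a w) (b w), h (y, w) := by
  have hS : MeasurableSet {z : ℝ × ℝ | z.1 ∈ Ioc (a z.2) (b z.2)} :=
    (measurableSet_lt (ha.comp measurable_snd) measurable_fst).inter
      (measurableSet_le measurable_fst (hb.comp measurable_snd))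
  convert (hh.indicator hS).lintegral_prod_left' (μ := volume) using 2 with w
  rw [← lintegral_indicator measurableSet_Ioc]
  rfl

theorem setLIntegral_Ioo_prod_eq_lintegral_Ioc {V : Set ℝ} (ν : Measure ℝ) [SFinite ν]
    {F : ℝ × ℝ → ℝ≥0∞} (hF : Measurable F) :
    ∫⁻ z in Ioo 0 1 ×ˢ V, F z ∂(volume.prod ν) = ∫⁻ v in V, (∫⁻ x in Ioc 0 1, F (x, v)) ∂ν := by
  rw [← Measure.prod_restrict, lintegral_prod_symm _ hF.aemeasurable,
    Measure.restrict_congr_set Ioo_ae_eq_Ioc]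

theorem lintegral_ell {p q : ℝ} {k : ℝ → ℝ → ℝ} {v : ℝ} (hk : Measurable fun w => k w v)
    (ν : Measure ℝ) (V : Set ℝ) (H : ℝ → ℝ≥0∞) :
    ∫⁻ w, H w ∂ell p q k ν V v
      = ∫⁻ w in V, ENNReal.ofReal (p * w * v⁻¹ * k w v) * H w ∂ν + ENNReal.ofReal q * H v := by
  have hd : Measurable fun w => ENNReal.ofReal (p * w * v⁻¹ * k w v) := by fun_prop
  rw [ell, lintegral_add_measure, lintegral_smul_measure, lintegral_dirac,
    lintegral_withDensity_eq_lintegral_mul_non_measurable _ hd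
      (ae_of_all _ fun _ => ENNReal.ofReal_lt_top)]
  rfl

theorem measurable_lTt {p q t : ℝ} {k : ℝ → ℝ → ℝ} (hk : Measurable (Function.uncurry k))
    (ν : Measure ℝ) [SFinite ν] (V : Set ℝ) {h : ℝ × ℝ → ℝ≥0∞} (hh : Measurable h) :
    Measurable (lTt p q k ν V t h) := by
  have hk' : ∀ v, Measurable fun w => k w v :=
    fun v => hk.comp (measurable_id.prodMk measurable_const)
  unfold lTt
  simp_rw [lintegral_ell (hk' _)]
  refine Measurable.ite (measurableSet_lt (by fun_prop) (by fun_prop)) (by fun_prop) ?_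
  exact (Measurable.lintegral_prod_right (by fun_prop)).add (by fun_prop)

theorem Tt_eq_toReal_lTt (p q : ℝ) (k : ℝ → ℝ → ℝ) (ν : Measure ℝ) (V : Set ℝ) (t : ℝ)
    {g : ℝ × ℝ → ℝ} (hg : Measurable g) (hg0 : ∀ z, 0 ≤ g z) (z : ℝ × ℝ) :
    Tt p q k ν V t g z = (lTt p q k ν V t (fun z => ENNReal.ofReal (g z)) z).toReal := by
  unfold Tt lTt
  split_ifs
  · exact (ENNReal.toReal_ofReal (hg0 _)).symm
  · exact integral_eq_lintegral_of_nonneg_ae (ae_of_all _ fun _ => hg0 _)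
      (hg.comp (by fun_prop)).aestronglyMeasurable

theorem Tt_nonneg (p q : ℝ) (k : ℝ → ℝ → ℝ) (ν : Measure ℝ) (V : Set ℝ) (t : ℝ)
    {g : ℝ × ℝ → ℝ} (hg0 : ∀ z, 0 ≤ g z) (z : ℝ × ℝ) : 0 ≤ Tt p q k ν V t g z := by
  unfold Tt
  split_ifs
  exacts [hg0 _, integral_nonneg fun _ => hg0 _]

section MassConservation

variable {p q t : ℝ} {k : ℝ → ℝ → ℝ} {ν : Measure ℝ} [SFinite ν] {V : Set ℝ}

theorem setLIntegral_Ioc_lTt (hk : Measurable (Function.uncurry k)) (hVm : MeasurableSet V)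
    (hV : ∀ w ∈ V, 0 < w) {h : ℝ × ℝ → ℝ≥0∞} (hh : Measurable h) {v : ℝ} (hv : 0 < v)
    (htv : t * v ∈ Icc 0 1) :
    ∫⁻ x in Ioc 0 1, lTt p q k ν V t h (x, v)
      = (∫⁻ w in V, ENNReal.ofReal (p * k w v) * (∫⁻ y in Ioc (1 - t * w) 1, h (y, w)) ∂ν)
        + ENNReal.ofReal q * (∫⁻ y in Ioc (1 - t * v) 1, h (y, v))
        + ∫⁻ y in Ioc 0 (1 - t * v), h (y, v) := by
  have hkv : Measurable fun w => k w v := hk.comp (measurable_id.prodMk measurable_const)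
  rw [← Ioc_union_Ioc_eq_Ioc htv.1 htv.2,
    lintegral_union measurableSet_Ioc (Ioc_disjoint_Ioc_of_le le_rfl)]
  congr 1
  · have hjump : ∀ x ∈ Ioc 0 (t * v), lTt p q k ν V t h (x, v)
        = (∫⁻ w in V, ENNReal.ofReal (p * w * v⁻¹ * k w v) * h (1 + x * w * v⁻¹ - t * w, w) ∂ν)
          + ENNReal.ofReal q * h (1 + x - t * v, v) := by
      intro x hx
      simp only [lTt, if_neg (not_lt.2 hx.2), lintegral_ell hkv, mul_assoc x,
        mul_inv_cancel₀ hv.ne', mul_one]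
    rw [setLIntegral_congr_fun measurableSet_Ioc hjump,
      lintegral_add_left (Measurable.lintegral_prod_right (by fun_prop))]
    congr 1
    · rw [lintegral_lintegral_swap (by fun_prop)]
      exact setLIntegral_congr_fun hVm fun w hw =>
        setLIntegral_Ioc_density_comp_affine (k w v) hv (hV w hw) fun y => h (y, w)
    · have hsub : ∀ x, 1 + x - t * v = x + (1 - t * v) := fun x => by ring
      simp_rw [hsub]
      rw [lintegral_const_mul' _ _ ENNReal.ofReal_ne_top,
        setLIntegral_Ioc_comp_add_right _ _ _ (fun y => h (y, v)), zero_add, add_sub_cancel]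
  · have hshift : ∀ x ∈ Ioc (t * v) 1, lTt p q k ν V t h (x, v) = h (x + -(t * v), v) :=
      fun x hx => by simp only [lTt, if_pos hx.1, sub_eq_add_neg]
    rw [setLIntegral_congr_fun measurableSet_Ioc hshift,
      setLIntegral_Ioc_comp_add_right _ _ _ (fun y => h (y, v)), add_neg_cancel, ← sub_eq_add_neg]

theorem setLIntegral_lTt (hk : Measurable (Function.uncurry k))
    (hk1 : ∀ w ∈ V, ∫⁻ v in V, ENNReal.ofReal (k w v) ∂ν = 1) (hp : 0 ≤ p) (hq : 0 ≤ q)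
    (hpq : p + q = 1) (hVm : MeasurableSet V) (hV : ∀ v ∈ V, 0 < v)
    (htV : ∀ v ∈ V, t * v ∈ Icc 0 1) {h : ℝ × ℝ → ℝ≥0∞} (hh : Measurable h) :
    ∫⁻ z in Ioo 0 1 ×ˢ V, lTt p q k ν V t h z ∂(volume.prod ν)
      = ∫⁻ z in Ioo 0 1 ×ˢ V, h z ∂(volume.prod ν) := by
  set J : ℝ → ℝ≥0∞ := fun w => ∫⁻ y in Ioc (1 - t * w) 1, h (y, w)
  have hJ : Measurable J := measurable_setLIntegral_Ioc hh (by fun_prop) measurable_const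
  have hkernel : ∀ w ∈ V,
      ∫⁻ v in V, ENNReal.ofReal (p * k w v) * J w ∂ν = ENNReal.ofReal p * J w := by
    intro w hw
    have hkw : Measurable fun v => k w v := hk.comp measurable_prodMk_left
    simp_rw [ENNReal.ofReal_mul hp, mul_right_comm _ _ (J w)]
    rw [lintegral_const_mul _ hkw.ennreal_ofReal, hk1 w hw, mul_one]
  rw [setLIntegral_Ioo_prod_eq_lintegral_Ioc ν (measurable_lTt hk ν V hh),
    setLIntegral_Ioo_prod_eq_lintegral_Ioc ν hh]
  calc ∫⁻ v in V, (∫⁻ x in Ioc 0 1, lTt p q k ν V t h (x, v)) ∂ν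
      = ∫⁻ v in V, ((∫⁻ w in V, ENNReal.ofReal (p * k w v) * J w ∂ν)
          + (ENNReal.ofReal q * J v + (∫⁻ y in Ioc 0 (1 - t * v), h (y, v)))) ∂ν :=
        setLIntegral_congr_fun hVm fun v hv => by
          rw [setLIntegral_Ioc_lTt hk hVm hV hh (hV v hv) (htV v hv), add_assoc]
    _ = ∫⁻ v in V, ∫⁻ w in V, ENNReal.ofReal (p * k w v) * J w ∂ν ∂ν
          + ∫⁻ v in V, (ENNReal.ofReal q * J v + (∫⁻ y in Ioc 0 (1 - t * v), h (y, v))) ∂ν :=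
        lintegral_add_left (Measurable.lintegral_prod_right (by fun_prop)) _
    _ = ∫⁻ v in V, (ENNReal.ofReal p * J v
          + (ENNReal.ofReal q * J v + (∫⁻ y in Ioc 0 (1 - t * v), h (y, v)))) ∂ν := by
        rw [lintegral_lintegral_swap (by fun_prop), setLIntegral_congr_fun hVm hkernel]
        exact (lintegral_add_left (hJ.const_mul _) _).symm
    _ = ∫⁻ v in V, (∫⁻ x in Ioc 0 1, h (x, v)) ∂ν := by
        refine setLIntegral_congr_fun hVm fun v hv => ?_
        rw [← add_assoc, ← add_mul, ← ENNReal.ofReal_add hp hq, hpq, ENNReal.ofReal_one, one_mul,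
          add_comm, ← lintegral_union measurableSet_Ioc (Ioc_disjoint_Ioc_of_le le_rfl),
          Ioc_union_Ioc_eq_Ioc (by linarith [(htV v hv).2]) (by linarith [(htV v hv).1])]

theorem Tt_ae_eq_of_ae_eq (hk : Measurable (Function.uncurry k))
    (hk1 : ∀ w ∈ V, ∫⁻ v in V, ENNReal.ofReal (k w v) ∂ν = 1) (hp : 0 ≤ p) (hq : 0 ≤ q)
    (hpq : p + q = 1) (hVm : MeasurableSet V) (hV : ∀ v ∈ V, 0 < v)
    (htV : ∀ v ∈ V, t * v ∈ Icc 0 1) {f g : ℝ × ℝ → ℝ}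
    (hfg : f =ᵐ[(volume.prod ν).restrict (Ioo (0 : ℝ) 1 ×ˢ V)] g) :
    Tt p q k ν V t f =ᵐ[(volume.prod ν).restrict (Ioo (0 : ℝ) 1 ×ˢ V)] Tt p q k ν V t g := by
  set μ := (volume.prod ν).restrict (Ioo (0 : ℝ) 1 ×ˢ V)
  set N := toMeasurable μ {z | f z ≠ g z} ∪ (Ioo (0 : ℝ) 1 ×ˢ V)ᶜ
  have hNm : MeasurableSet N :=
    (measurableSet_toMeasurable _ _).union (measurableSet_Ioo.prod hVm).compl
  have hN : μ N = 0 := measure_union_null (by rwa [measure_toMeasurable, ← ae_iff])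
    (ae_iff.1 (ae_restrict_mem (measurableSet_Ioo.prod hVm)))
  have hfg' : ∀ z ∉ N, f z = g z := fun z hz =>
    not_not.1 fun hne => hz (Or.inl (subset_toMeasurable _ _ hne))
  have hN' : ∀ᵐ z ∂μ, lTt p q k ν V t (N.indicator 1) z = 0 := by
    refine (lintegral_eq_zero_iff (measurable_lTt hk ν V (measurable_one.indicator hNm))).1 ?_
    rw [setLIntegral_lTt hk hk1 hp hq hpq hVm hV htV (measurable_one.indicator hNm),
      lintegral_indicator_one hNm]
    exact hN
  filter_upwards [hN'] with z hz
  unfold lTt at hz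
  unfold Tt
  split_ifs at hz ⊢
  · exact hfg' _ (by simpa using hz)
  · refine integral_congr_ae ?_
    rw [lintegral_eq_zero_iff (by fun_prop)] at hz
    filter_upwards [hz] with w hw
    exact hfg' _ (by simpa using hw)

theorem integral_Tt_eq_integral (hk : Measurable (Function.uncurry k))
    (hk1 : ∀ w ∈ V, ∫⁻ v in V, ENNReal.ofReal (k w v) ∂ν = 1) (hp : 0 ≤ p) (hq : 0 ≤ q)
    (hpq : p + q = 1) (hVm : MeasurableSet V) (hV : ∀ v ∈ V, 0 < v)
    (htV : ∀ v ∈ V, t * v ∈ Icc 0 1) {g : ℝ × ℝ → ℝ} (hg : Measurable g) (hg0 : ∀ z, 0 ≤ g z)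
    (hgi : IntegrableOn g (Ioo 0 1 ×ˢ V) (volume.prod ν)) :
    ∫ z in Ioo 0 1 ×ˢ V, Tt p q k ν V t g z ∂(volume.prod ν)
      = ∫ z in Ioo 0 1 ×ˢ V, g z ∂(volume.prod ν) := by
  have hG : Measurable fun z => ENNReal.ofReal (g z) := hg.ennreal_ofReal
  have hmass := setLIntegral_lTt (p := p) (q := q) (t := t) hk hk1 hp hq hpq hVm hV htV hG
  have hTm := measurable_lTt (p := p) (q := q) (t := t) hk ν V hG
  simp_rw [Tt_eq_toReal_lTt p q k ν V t hg hg0]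
  rw [integral_toReal hTm.aemeasurable (ae_lt_top hTm (hmass ▸ hgi.lintegral_lt_top.ne)), hmass,
    integral_eq_lintegral_of_nonneg_ae (ae_of_all _ hg0) hg.aestronglyMeasurable]

end MassConservation

theorem stmt9_general
    (a b p q : ℝ) (ha : 0 ≤ a) (hab : a < b)
    (hp : 0 ≤ p) (hq : 0 ≤ q)
    (V : Set ℝ) (hV : V ⊆ Set.Ioo a b) (hVm : MeasurableSet V)
    (ν : Measure ℝ) [SigmaFinite ν]
    (k : ℝ → ℝ → ℝ) (hkm : Measurable (Function.uncurry k))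
    (hknn : ∀ w v : ℝ, 0 ≤ k w v)
    (hk1 : ∀ w ∈ V, ∫ v in V, k w v ∂ν = 1)
    (hpq1 : p + q = 1)
    (t : ℝ) (ht0 : 0 ≤ t) (ht1 : t ≤ b⁻¹)
    (f : ℝ × ℝ → ℝ)
    (hf : IntegrableOn f ((Set.Ioo (0 : ℝ) 1) ×ˢ V) ((volume : Measure ℝ).prod ν))
    (hfnn : ∀ᵐ z ∂(((volume : Measure ℝ).prod ν).restrict ((Set.Ioo (0 : ℝ) 1) ×ˢ V)),
      0 ≤ f z) :
    (∀ᵐ z ∂(((volume : Measure ℝ).prod ν).restrict ((Set.Ioo (0 : ℝ) 1) ×ˢ V)),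
      0 ≤ Tt p q k ν V t f z) ∧
    ∫ z in (Set.Ioo (0 : ℝ) 1) ×ˢ V, |Tt p q k ν V t f z| ∂((volume : Measure ℝ).prod ν)
      = ∫ z in (Set.Ioo (0 : ℝ) 1) ×ˢ V, |f z| ∂((volume : Measure ℝ).prod ν) := by
  have hV0 : ∀ v ∈ V, 0 < v := fun v hv => ha.trans_lt (hV hv).1
  have htV : ∀ v ∈ V, t * v ∈ Icc 0 1 := by
    intro v hv
    have hb : 0 < b := ha.trans_lt hab
    refine ⟨mul_nonneg ht0 (hV0 v hv).le, ?_⟩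
    calc t * v ≤ b⁻¹ * b := mul_le_mul ht1 (hV hv).2.le (hV0 v hv).le (inv_nonneg.2 hb.le)
      _ = 1 := inv_mul_cancel₀ hb.ne'
  have hk1' : ∀ w ∈ V, ∫⁻ v in V, ENNReal.ofReal (k w v) ∂ν = 1 := fun w hw => by
    rw [← ofReal_integral_eq_lintegral_ofReal
      (Integrable.of_integral_ne_zero (by rw [hk1 w hw]; exact one_ne_zero))
      (ae_of_all _ (hknn w)), hk1 w hw, ENNReal.ofReal_one]
  set g : ℝ × ℝ → ℝ := fun z => max (hf.1.mk f z) 0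
  have hg : Measurable g := hf.1.stronglyMeasurable_mk.measurable.max measurable_const
  have hg0 : ∀ z, 0 ≤ g z := fun z => le_max_right _ _
  have hfg : f =ᵐ[(volume.prod ν).restrict (Ioo 0 1 ×ˢ V)] g := by
    filter_upwards [hf.1.ae_eq_mk, hfnn] with z hz hz0
    rw [hz] at hz0 ⊢
    exact (max_eq_left hz0).symm
  have hTfg := Tt_ae_eq_of_ae_eq hkm hk1' hp hq hpq1 hVm hV0 htV hfg
  refine ⟨hTfg.mono fun z hz => hz ▸ Tt_nonneg p q k ν V t hg0 z, ?_⟩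
  calc ∫ z in Ioo 0 1 ×ˢ V, |Tt p q k ν V t f z| ∂(volume.prod ν)
      = ∫ z in Ioo 0 1 ×ˢ V, Tt p q k ν V t g z ∂(volume.prod ν) :=
        integral_congr_ae (hTfg.mono fun z hz => by
          simp only [hz, abs_of_nonneg (Tt_nonneg p q k ν V t hg0 z)])
    _ = ∫ z in Ioo 0 1 ×ˢ V, g z ∂(volume.prod ν) :=
        integral_Tt_eq_integral hkm hk1' hp hq hpq1 hVm hV0 htV hg hg0 (hf.congr_fun_ae hfg)
    _ = ∫ z in Ioo 0 1 ×ˢ V, |f z| ∂(volume.prod ν) :=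
        integral_congr_ae (by
          filter_upwards [hfg, hfnn] with z hz hz0
          simp only [← hz, abs_of_nonneg hz0])

theorem stmt9
    (a b p q : ℝ) (ha : 0 ≤ a) (hab : a < b)
    (hp : 0 ≤ p) (hq : 0 ≤ q) (hpq : 0 < p + q)
    (V : Set ℝ) (hV : V ⊆ Set.Ioo a b) (hVm : MeasurableSet V)
    (ν : Measure ℝ) [SigmaFinite ν]
    (k : ℝ → ℝ → ℝ) (hkm : Measurable (Function.uncurry k))
    (hknn : ∀ w v : ℝ, 0 ≤ k w v)
    (hk1 : ∀ w ∈ V, ∫ v in V, k w v ∂ν = 1)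
    (hpq1 : p + q = 1)
    (t : ℝ) (ht0 : 0 ≤ t) (ht1 : t ≤ b⁻¹)
    (f : ℝ × ℝ → ℝ)
    (hf : IntegrableOn f ((Set.Ioo (0 : ℝ) 1) ×ˢ V) ((volume : Measure ℝ).prod ν))
    (hfnn : ∀ᵐ z ∂(((volume : Measure ℝ).prod ν).restrict ((Set.Ioo (0 : ℝ) 1) ×ˢ V)),
      0 ≤ f z) :
    (∀ᵐ z ∂(((volume : Measure ℝ).prod ν).restrict ((Set.Ioo (0 : ℝ) 1) ×ˢ V)),
      0 ≤ Tt p q k ν V t f z) ∧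
    ∫ z in (Set.Ioo (0 : ℝ) 1) ×ˢ V, |Tt p q k ν V t f z| ∂((volume : Measure ℝ).prod ν)
      = ∫ z in (Set.Ioo (0 : ℝ) 1) ×ˢ V, |f z| ∂((volume : Measure ℝ).prod ν) :=
  stmt9_general a b p q ha hab hp hq V hV hVm ν k hkm hknn hk1 hpq1 t ht0 ht1 f hf hfnn
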